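/- (Theorem 2: A link from Δ-flatness to ℰ-distribution-gap robustness.) Fix x ∈ ℝ^d, let p : ℝ^d → ℝ be strictly positive with log∘p differentiable at x, let Δ > 0 and l* ∈ ℝ, and fix for each admissible δ a constant C_δ ∈ ℝ. Assume θ* is Δ-flat at x for p: for every δ ∈ ℝ^{d×m} with ‖δ‖₂ ≤ Δ and δWᵀ symmetric, L(x; θ*+δ, p) = l*. Then every perturbed density p̂_δ = e^{−I(·,δ)}·p with ‖δ‖₂ ≤ Δ and δWᵀ symmetric satisfies both L(x; θ*, p̂_δ) = l* and D(p‖p̂_δ) ≤ sup{ D(p‖p̂_{δ'}) : ‖δ'‖₂ ≤ Δ, δ'Wᵀ symmetric }; that is, θ* is ℰ-distribution-gap robust on the set of perturbed distributions with ℰ bounded above by the maximal divergence over that set. -/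

import Mathlib

open Matrix
open scoped RealInnerProductSpace

/-- The random-feature score model with linear activation:
`s_θ(x) = (1/m) · θ (Wᵀ x + Uᵀ e)`. -/
noncomputable def score (d m de : ℕ) (W : Matrix (Fin d) (Fin m) ℝ)
    (U : Matrix (Fin de) (Fin m) ℝ) (e : Fin de → ℝ)
    (θ : Matrix (Fin d) (Fin m) ℝ) (x : EuclideanSpace ℝ (Fin d)) :
    EuclideanSpace ℝ (Fin d) :=
  (m : ℝ)⁻¹ • ((WithLp.equiv 2 _).symm (θ.mulVec (Wᵀ.mulVec x + Uᵀ.mulVec e)) :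
    EuclideanSpace ℝ (Fin d))

/-- The tilting exponent `I(x, δ) = (1/(2m))·xᵀ(δWᵀ)x + (1/m)·xᵀ(δUᵀe) + C`. -/
noncomputable def tiltExp (d m de : ℕ) (W : Matrix (Fin d) (Fin m) ℝ)
    (U : Matrix (Fin de) (Fin m) ℝ) (e : Fin de → ℝ)
    (δ : Matrix (Fin d) (Fin m) ℝ) (C : ℝ) (x : EuclideanSpace ℝ (Fin d)) : ℝ :=
  (2 * (m : ℝ))⁻¹ * ⟪x, ((WithLp.equiv 2 _).symm ((δ * Wᵀ).mulVec x) :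
      EuclideanSpace ℝ (Fin d))⟫
    + (m : ℝ)⁻¹ * ⟪x, ((WithLp.equiv 2 _).symm (δ.mulVec (Uᵀ.mulVec e)) :
      EuclideanSpace ℝ (Fin d))⟫
    + C

/-- The perturbed density `p̂_δ(x) = e^{−I(x,δ)} · p(x)`. -/
noncomputable def tiltedDensity (d m de : ℕ) (W : Matrix (Fin d) (Fin m) ℝ)
    (U : Matrix (Fin de) (Fin m) ℝ) (e : Fin de → ℝ)
    (δ : Matrix (Fin d) (Fin m) ℝ) (C : ℝ)
    (p : EuclideanSpace ℝ (Fin d) → ℝ) (x : EuclideanSpace ℝ (Fin d)) : ℝ :=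
  Real.exp (-(tiltExp d m de W U e δ C x)) * p x

/-- The score-matching loss at `x`: `L(x; θ, p) = ‖s_θ(x) − ∇ log p(x)‖₂²`. -/
noncomputable def smLoss (d m de : ℕ) (W : Matrix (Fin d) (Fin m) ℝ)
    (U : Matrix (Fin de) (Fin m) ℝ) (e : Fin de → ℝ)
    (θ : Matrix (Fin d) (Fin m) ℝ) (p : EuclideanSpace ℝ (Fin d) → ℝ)
    (x : EuclideanSpace ℝ (Fin d)) : ℝ :=
  ‖score d m de W U e θ x - gradient (fun y => Real.log (p y)) x‖ ^ 2

/-- The Frobenius norm `‖δ‖₂` of a matrix. -/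
noncomputable def frobNorm (d m : ℕ) (δ : Matrix (Fin d) (Fin m) ℝ) : ℝ :=
  Real.sqrt (∑ i, ∑ j, δ i j ^ 2)

open MeasureTheory

/-- The Kullback–Leibler divergence `D(p‖q) = ∫ p(x)·log(p(x)/q(x)) dx` between two densities
on `ℝ^d`, with respect to Lebesgue measure. -/
noncomputable def klDiv (d : ℕ) (p q : EuclideanSpace ℝ (Fin d) → ℝ) : ℝ :=
  ∫ x : EuclideanSpace ℝ (Fin d), p x * Real.log (p x / q x)

/-! When `δWᵀ` is symmetric, the gradient of the tilting exponent `I(·, δ)` is exactly the score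
`s_δ` of the perturbation, so `∇ log p̂_δ = ∇ log p − s_δ`. As the score is linear in `θ`, this gives
`L(x; θ, p̂_δ) = L(x; θ + δ, p)`, which flatness pins to `l*`. The divergence bound holds because
`p̂_δ` is itself one of the densities in the supremum. -/

theorem HasGradientAt.sub {𝕜 F : Type*} [RCLike 𝕜] [NormedAddCommGroup F] [InnerProductSpace 𝕜 F]
    [CompleteSpace F] {f g : F → 𝕜} {f' g' x : F} (hf : HasGradientAt f f' x)
    (hg : HasGradientAt g g' x) : HasGradientAt (fun y => f y - g y) (f' - g') x := by
  rw [hasGradientAt_iff_hasFDerivAt, map_sub]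
  exact hf.hasFDerivAt.sub hg.hasFDerivAt

theorem LinearMap.IsSymmetric.hasGradientAt_quadratic {F : Type*} [NormedAddCommGroup F]
    [InnerProductSpace ℝ F] [CompleteSpace F] {T : F →L[ℝ] F}
    (hT : (T : F →ₗ[ℝ] F).IsSymmetric) (b : F) (c : ℝ) (x : F) :
    HasGradientAt (fun y => 2⁻¹ * ⟪y, T y⟫ + ⟪y, b⟫ + c) (T x + b) x := by
  have hfun : (fun y => 2⁻¹ * ⟪y, T y⟫ + ⟪y, b⟫ + c)
      = fun y => 2⁻¹ * T.reApplyInnerSelf y + innerSL ℝ b y + c := by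
    funext y
    simp [ContinuousLinearMap.reApplyInnerSelf_apply, real_inner_comm]
  rw [hasGradientAt_iff_hasFDerivAt, hfun]
  refine ((((hT.hasStrictFDerivAt_reApplyInnerSelf x).hasFDerivAt.const_mul 2⁻¹).add
    (innerSL ℝ b).hasFDerivAt).add_const c).congr_fderiv ?_
  ext w
  simp

section ScoreModel

variable {d m de : ℕ} {W : Matrix (Fin d) (Fin m) ℝ} {U : Matrix (Fin de) (Fin m) ℝ}
  {e : Fin de → ℝ}

theorem score_add (θ δ : Matrix (Fin d) (Fin m) ℝ) (x : EuclideanSpace ℝ (Fin d)) :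
    score d m de W U e (θ + δ) x = score d m de W U e θ x + score d m de W U e δ x := by
  rw [score, score, score, add_mulVec, ← smul_add]
  rfl

theorem hasGradientAt_tiltExp {δ : Matrix (Fin d) (Fin m) ℝ} (hδ : (δ * Wᵀ).IsSymm) (C : ℝ)
    (x : EuclideanSpace ℝ (Fin d)) :
    HasGradientAt (tiltExp d m de W U e δ C) (score d m de W U e δ x) x := by
  set T := toEuclideanCLM (𝕜 := ℝ) ((m : ℝ)⁻¹ • (δ * Wᵀ))
  set b : EuclideanSpace ℝ (Fin d) := (m : ℝ)⁻¹ • WithLp.toLp 2 (δ *ᵥ Uᵀ *ᵥ e)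
  have hT : (T : EuclideanSpace ℝ (Fin d) →ₗ[ℝ] EuclideanSpace ℝ (Fin d)).IsSymmetric :=
    isSymmetric_toEuclideanLin_iff.mpr (isHermitian_iff_isSymm.mpr (hδ.smul _))
  have hT_apply : ∀ y, T y = (m : ℝ)⁻¹ • WithLp.toLp 2 ((δ * Wᵀ) *ᵥ y.ofLp) := fun y => by
    simp only [T, map_smul]
    rfl
  have htilt : tiltExp d m de W U e δ C = fun y => 2⁻¹ * ⟪y, T y⟫ + ⟪y, b⟫ + C := by
    funext y
    simp only [tiltExp, hT_apply, b, inner_smul_right, mul_inv, WithLp.equiv_symm_apply]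
    ring
  have hscore : score d m de W U e δ x = T x + b := by
    rw [score, hT_apply, mulVec_add, ← mulVec_mulVec, ← smul_add]
    rfl
  rw [htilt, hscore]
  exact hT.hasGradientAt_quadratic b C x

theorem gradient_log_tiltedDensity {p : EuclideanSpace ℝ (Fin d) → ℝ} (hp : ∀ y, p y ≠ 0)
    {x : EuclideanSpace ℝ (Fin d)} (hlogp : DifferentiableAt ℝ (fun y => Real.log (p y)) x)
    {δ : Matrix (Fin d) (Fin m) ℝ} (hδ : (δ * Wᵀ).IsSymm) (C : ℝ) :
    gradient (fun y => Real.log (tiltedDensity d m de W U e δ C p y)) x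
      = gradient (fun y => Real.log (p y)) x - score d m de W U e δ x := by
  have hlog : (fun y => Real.log (tiltedDensity d m de W U e δ C p y))
      = fun y => Real.log (p y) - tiltExp d m de W U e δ C y := by
    funext y
    rw [tiltedDensity, Real.log_mul (Real.exp_ne_zero _) (hp y), Real.log_exp]
    ring
  rw [hlog]
  exact (hlogp.hasGradientAt.sub (hasGradientAt_tiltExp hδ C x)).gradient

theorem smLoss_tiltedDensity (θ : Matrix (Fin d) (Fin m) ℝ) {p : EuclideanSpace ℝ (Fin d) → ℝ}
    (hp : ∀ y, p y ≠ 0) {x : EuclideanSpace ℝ (Fin d)}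
    (hlogp : DifferentiableAt ℝ (fun y => Real.log (p y)) x)
    {δ : Matrix (Fin d) (Fin m) ℝ} (hδ : (δ * Wᵀ).IsSymm) (C : ℝ) :
    smLoss d m de W U e θ (tiltedDensity d m de W U e δ C p) x
      = smLoss d m de W U e (θ + δ) p x := by
  rw [smLoss, smLoss, gradient_log_tiltedDensity hp hlogp hδ, score_add, sub_sub_eq_add_sub]

end ScoreModel

theorem flat_minimum_distribution_gap_robust_general (d m de : ℕ)
    (θs W : Matrix (Fin d) (Fin m) ℝ) (U : Matrix (Fin de) (Fin m) ℝ) (e : Fin de → ℝ)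
    (p : EuclideanSpace ℝ (Fin d) → ℝ) (hp : ∀ y, 0 < p y)
    (x : EuclideanSpace ℝ (Fin d))
    (hlogp : DifferentiableAt ℝ (fun y => Real.log (p y)) x)
    (Δ : ℝ) (lstar : ℝ)
    (C : Matrix (Fin d) (Fin m) ℝ → ℝ)
    (hflat : ∀ δ : Matrix (Fin d) (Fin m) ℝ, frobNorm d m δ ≤ Δ → (δ * Wᵀ).IsSymm →
      smLoss d m de W U e (θs + δ) p x = lstar) :
    ∀ δ : Matrix (Fin d) (Fin m) ℝ, frobNorm d m δ ≤ Δ → (δ * Wᵀ).IsSymm →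
      smLoss d m de W U e θs (tiltedDensity d m de W U e δ (C δ) p) x = lstar ∧
      (↑(klDiv d p (tiltedDensity d m de W U e δ (C δ) p)) : EReal)
        ≤ ⨆ (δ' : Matrix (Fin d) (Fin m) ℝ)
            (_ : frobNorm d m δ' ≤ Δ ∧ (δ' * Wᵀ).IsSymm),
            (↑(klDiv d p (tiltedDensity d m de W U e δ' (C δ') p)) : EReal) := by
  intro δ hδ hsymm
  refine ⟨?_, le_iSup₂_of_le δ ⟨hδ, hsymm⟩ le_rfl⟩
  rw [smLoss_tiltedDensity θs (fun y => (hp y).ne') hlogp hsymm, hflat δ hδ hsymm]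

/-- **Theorem 2: from Δ-flatness to ℰ-distribution-gap robustness.**
Suppose `θ*` is `Δ`-flat at `x` for `p`: `L(x; θ*+δ, p) = l*` for every `δ` with `‖δ‖₂ ≤ Δ`
and `δWᵀ` symmetric. Then every perturbed density `p̂_δ = e^{−I(·,δ)}·p` (with `‖δ‖₂ ≤ Δ`,
`δWᵀ` symmetric, and per-δ constant `C_δ`) satisfies both `L(x; θ*, p̂_δ) = l*` and
`D(p‖p̂_δ) ≤ sup { D(p‖p̂_{δ'}) : ‖δ'‖₂ ≤ Δ, δ'Wᵀ symmetric }`, the supremum taken in the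
extended reals. -/
theorem flat_minimum_distribution_gap_robust (d m de : ℕ) (hd : 0 < d) (hm : 0 < m)
    (hde : 0 < de)
    (θs W : Matrix (Fin d) (Fin m) ℝ) (U : Matrix (Fin de) (Fin m) ℝ) (e : Fin de → ℝ)
    (p : EuclideanSpace ℝ (Fin d) → ℝ) (hp : ∀ y, 0 < p y)
    (x : EuclideanSpace ℝ (Fin d))
    (hlogp : DifferentiableAt ℝ (fun y => Real.log (p y)) x)
    (Δ : ℝ) (hΔ : 0 < Δ) (lstar : ℝ)
    (C : Matrix (Fin d) (Fin m) ℝ → ℝ)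
    (hflat : ∀ δ : Matrix (Fin d) (Fin m) ℝ, frobNorm d m δ ≤ Δ → (δ * Wᵀ).IsSymm →
      smLoss d m de W U e (θs + δ) p x = lstar) :
    ∀ δ : Matrix (Fin d) (Fin m) ℝ, frobNorm d m δ ≤ Δ → (δ * Wᵀ).IsSymm →
      smLoss d m de W U e θs (tiltedDensity d m de W U e δ (C δ) p) x = lstar ∧
      (↑(klDiv d p (tiltedDensity d m de W U e δ (C δ) p)) : EReal)
        ≤ ⨆ (δ' : Matrix (Fin d) (Fin m) ℝ)
            (_ : frobNorm d m δ' ≤ Δ ∧ (δ' * Wᵀ).IsSymm),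
            (↑(klDiv d p (tiltedDensity d m de W U e δ' (C δ') p)) : EReal) :=
  flat_minimum_distribution_gap_robust_general d m de θs W U e p hp x hlogp Δ lstar C hflat
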